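/- (Lemma: inference error vs. training error, quantitative version.) Let (Y,X) with pmf P and (Ỹ,X̃) with pmf P̃ be jointly distributed on the same finite sets 𝒴 × 𝒳, with P̃_{X̃}(x) > 0 whenever P_X(x) > 0, and suppose |L(y,a)| ≤ M for all y and a. If D_{χ²}(P_{Y|X=x} || P̃_{Ỹ|X̃=x}) ≤ β² for every x with P_X(x) > 0, then H_L(Y|X) ≤ H_L(Y; Ỹ | X) ≤ H_L(Y|X) + 2Mβ. -/

import Mathlib

open Finset

open Classical in
/-- Probability of an event under a pmf `p` on a finite sample space. -/
noncomputable def pr {Ω : Type*} [Fintype Ω] (p : Ω → ℝ) (E : Ω → Prop) : ℝ :=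
  ∑ ω, if E ω then p ω else 0

/-- Conditional distribution of a random variable `Y` given an event `E`. -/
noncomputable def condDist {Ω 𝒴 : Type*} [Fintype Ω] (p : Ω → ℝ) (Y : Ω → 𝒴)
    (E : Ω → Prop) : 𝒴 → ℝ :=
  fun y => pr p (fun ω => Y ω = y ∧ E ω) / pr p E

/-- Neyman's χ²-divergence `D_{χ²}(P‖Q)`.  (In Lean, `x / 0 = 0`, which realizes
the convention `0²/0 = 0` under absolute continuity.) -/
noncomputable def chiSqDiv {𝒴 : Type*} [Fintype 𝒴] (P Q : 𝒴 → ℝ) : ℝ :=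
  ∑ y, (P y - Q y) ^ 2 / Q y

/-- Expected loss `E_{Y∼P}[L(Y,a)]`. -/
noncomputable def expLoss {𝒴 𝒜 : Type*} [Fintype 𝒴] (L : 𝒴 → 𝒜 → ℝ) (P : 𝒴 → ℝ)
    (a : 𝒜) : ℝ :=
  ∑ y, P y * L y a

/-- The `L`-entropy `H_L(P) = min_{a∈𝒜} E_{Y∼P}[L(Y,a)]`. -/
noncomputable def Lentropy {𝒴 𝒜 : Type*} [Fintype 𝒴] (L : 𝒴 → 𝒜 → ℝ) (P : 𝒴 → ℝ) : ℝ :=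
  ⨅ a : 𝒜, expLoss L P a

/-- The `L`-conditional entropy `H_L(Y|X) = Σ_x P_X(x) H_L(P_{Y|X=x})`. -/
noncomputable def LcondEntropy {Ω 𝒳 𝒴 𝒜 : Type*} [Fintype Ω] [Fintype 𝒳] [Fintype 𝒴]
    (L : 𝒴 → 𝒜 → ℝ) (p : Ω → ℝ) (Y : Ω → 𝒴) (X : Ω → 𝒳) : ℝ :=
  ∑ x, pr p (fun ω => X ω = x) * Lentropy L (condDist p Y (fun ω => X ω = x))

/-- `b` selects, for every probability mass function `P` on `𝒴`, a Bayes action `b P`. -/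
def IsBayesSelector {𝒴 𝒜 : Type*} [Fintype 𝒴] (L : 𝒴 → 𝒜 → ℝ) (b : (𝒴 → ℝ) → 𝒜) : Prop :=
  ∀ P : 𝒴 → ℝ, (∀ y, 0 ≤ P y) → (∑ y, P y) = 1 →
    ∀ a : 𝒜, expLoss L P (b P) ≤ expLoss L P a

/-- The `L`-divergence `D_L(P‖Q) = E_{Y∼P}[L(Y,a_Q)] − E_{Y∼P}[L(Y,a_P)]`
for the choice `a_P = b P`, `a_Q = b Q` of Bayes actions. -/
noncomputable def Ldiv {𝒴 𝒜 : Type*} [Fintype 𝒴] (L : 𝒴 → 𝒜 → ℝ) (b : (𝒴 → ℝ) → 𝒜)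
    (P Q : 𝒴 → ℝ) : ℝ :=
  expLoss L P (b Q) - expLoss L P (b P)

/-- The `L`-conditional cross entropy
`H_L(Y;Ỹ|X) = Σ_x P_X(x) E_{Y∼P_{Y|X=x}}[L(Y, a_{P̃_{Ỹ|X̃=x}})]`. -/
noncomputable def LcrossEntropy {Ω Ω' 𝒳 𝒴 𝒜 : Type*} [Fintype Ω] [Fintype Ω']
    [Fintype 𝒳] [Fintype 𝒴] (L : 𝒴 → 𝒜 → ℝ) (b : (𝒴 → ℝ) → 𝒜)
    (p : Ω → ℝ) (Y : Ω → 𝒴) (X : Ω → 𝒳)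
    (p' : Ω' → ℝ) (Y' : Ω' → 𝒴) (X' : Ω' → 𝒳) : ℝ :=
  ∑ x, pr p (fun ω => X ω = x) *
    expLoss L (condDist p Y (fun ω => X ω = x))
      (b (condDist p' Y' (fun ω => X' ω = x)))

/-! For each `x` the cross-entropy term exceeds the entropy term by the `L`-divergence
`D_L(P‖Q)` of `P = P_{Y|X=x}` from `Q = P̃_{Ỹ|X̃=x}`. Passing from `P` to `Q` and back changes an
expected loss by at most `Mβ` (Cauchy–Schwarz after writing `P - Q = √Q · (P - Q)/√Q`), and on
the way `b Q` beats `b P` under `Q`; hence `D_L(P‖Q) ≤ 2Mβ`. -/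

section Probability

variable {Ω 𝒴 : Type*} [Fintype Ω]

theorem pr_nonneg {p : Ω → ℝ} (hp : ∀ ω, 0 ≤ p ω) (E : Ω → Prop) : 0 ≤ pr p E := by
  unfold pr
  exact sum_nonneg fun ω _ => by split_ifs <;> simp [hp ω]

theorem sum_pr_and_eq_pr [Fintype 𝒴] (p : Ω → ℝ) (Y : Ω → 𝒴) (E : Ω → Prop) :
    ∑ y, pr p (fun ω => Y ω = y ∧ E ω) = pr p E := by
  classical
  unfold pr
  rw [sum_comm]
  refine sum_congr rfl fun ω _ => ?_
  by_cases hE : E ω <;> simp [hE]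

theorem sum_pr_eq_sum {𝒳 : Type*} [Fintype 𝒳] (p : Ω → ℝ) (X : Ω → 𝒳) :
    ∑ x, pr p (fun ω => X ω = x) = ∑ ω, p ω := by
  classical
  unfold pr
  rw [sum_comm]
  simp

theorem condDist_nonneg {p : Ω → ℝ} (hp : ∀ ω, 0 ≤ p ω) (Y : Ω → 𝒴) (E : Ω → Prop) (y : 𝒴) :
    0 ≤ condDist p Y E y :=
  div_nonneg (pr_nonneg hp _) (pr_nonneg hp _)

theorem sum_condDist [Fintype 𝒴] {p : Ω → ℝ} (Y : Ω → 𝒴) {E : Ω → Prop} (hE : pr p E ≠ 0) :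
    ∑ y, condDist p Y E y = 1 := by
  unfold condDist
  rw [← sum_div, sum_pr_and_eq_pr, div_self hE]

end Probability

section ChiSquare

variable {𝒴 : Type*} [Fintype 𝒴] {P Q : 𝒴 → ℝ}

theorem sum_sub_mul_le_sqrt_chiSqDiv_mul (hQ : ∀ y, 0 ≤ Q y) (hPQ : ∀ y, Q y = 0 → P y = 0)
    (f : 𝒴 → ℝ) :
    ∑ y, (P y - Q y) * f y ≤ √(chiSqDiv P Q) * √(∑ y, Q y * f y ^ 2) := by
  have hsplit : ∀ y, (P y - Q y) * f y = (P y - Q y) / √(Q y) * (√(Q y) * f y) := by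
    intro y
    by_cases hy : Q y = 0
    · simp [hy, hPQ y hy]
    · have : √(Q y) ≠ 0 := Real.sqrt_ne_zero'.2 ((hQ y).lt_of_ne' hy)
      field_simp
  have hchi : chiSqDiv P Q = ∑ y, ((P y - Q y) / √(Q y)) ^ 2 := by
    simp only [chiSqDiv, div_pow, Real.sq_sqrt (hQ _)]
  have hQf : ∑ y, Q y * f y ^ 2 = ∑ y, (√(Q y) * f y) ^ 2 := by
    simp only [mul_pow, Real.sq_sqrt (hQ _)]
  rw [sum_congr rfl fun y _ => hsplit y, hchi, hQf]
  exact Real.sum_mul_le_sqrt_mul_sqrt univ _ _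

theorem sqrt_sum_mul_sq_le (hQ : ∀ y, 0 ≤ Q y) (hQ1 : ∑ y, Q y = 1) {f : 𝒴 → ℝ} {M : ℝ}
    (hf : ∀ y, |f y| ≤ M) : √(∑ y, Q y * f y ^ 2) ≤ M := by
  obtain ⟨y₀, -, -⟩ := exists_ne_zero_of_sum_ne_zero (hQ1.trans_ne one_ne_zero)
  refine (Real.sqrt_le_left ((abs_nonneg _).trans (hf y₀))).2 ?_
  calc ∑ y, Q y * f y ^ 2 ≤ ∑ y, Q y * M ^ 2 := by
        refine sum_le_sum fun y _ => mul_le_mul_of_nonneg_left ?_ (hQ y)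
        exact sq_le_sq' (abs_le.1 (hf y)).1 (abs_le.1 (hf y)).2
    _ = M ^ 2 := by rw [← sum_mul, hQ1, one_mul]

theorem abs_sum_sub_mul_le_of_chiSqDiv_le (hQ : ∀ y, 0 ≤ Q y) (hQ1 : ∑ y, Q y = 1)
    (hPQ : ∀ y, Q y = 0 → P y = 0) {β : ℝ} (hβ : 0 ≤ β) (hchi : chiSqDiv P Q ≤ β ^ 2)
    {f : 𝒴 → ℝ} {M : ℝ} (hf : ∀ y, |f y| ≤ M) :
    |∑ y, (P y - Q y) * f y| ≤ M * β := by
  have key : ∀ g : 𝒴 → ℝ, (∀ y, |g y| ≤ M) → ∑ y, (P y - Q y) * g y ≤ M * β := by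
    intro g hg
    calc ∑ y, (P y - Q y) * g y ≤ √(chiSqDiv P Q) * √(∑ y, Q y * g y ^ 2) :=
          sum_sub_mul_le_sqrt_chiSqDiv_mul hQ hPQ g
      _ ≤ β * M := mul_le_mul (Real.sqrt_le_iff.2 ⟨hβ, hchi⟩) (sqrt_sum_mul_sq_le hQ hQ1 hg)
          (Real.sqrt_nonneg _) hβ
      _ = M * β := mul_comm β M
  refine abs_le.2 ⟨?_, key f hf⟩
  have := key (-f) fun y => by simpa only [Pi.neg_apply, abs_neg] using hf y
  simp only [Pi.neg_apply, mul_neg, sum_neg_distrib] at this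
  linarith

end ChiSquare

section Loss

variable {𝒴 𝒜 : Type*} [Fintype 𝒴] {L : 𝒴 → 𝒜 → ℝ} {P Q : 𝒴 → ℝ}

theorem abs_expLoss_sub_expLoss_le (hQ : ∀ y, 0 ≤ Q y) (hQ1 : ∑ y, Q y = 1)
    (hPQ : ∀ y, Q y = 0 → P y = 0) {β : ℝ} (hβ : 0 ≤ β) (hchi : chiSqDiv P Q ≤ β ^ 2)
    {M : ℝ} {a : 𝒜} (hL : ∀ y, |L y a| ≤ M) :
    |expLoss L P a - expLoss L Q a| ≤ M * β := by
  have : expLoss L P a - expLoss L Q a = ∑ y, (P y - Q y) * L y a := by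
    simp only [expLoss, ← sum_sub_distrib, sub_mul]
  rw [this]
  exact abs_sum_sub_mul_le_of_chiSqDiv_le hQ hQ1 hPQ hβ hchi hL

theorem Ldiv_le_of_chiSqDiv_le {b : (𝒴 → ℝ) → 𝒜} (hb : IsBayesSelector L b)
    (hQ : ∀ y, 0 ≤ Q y) (hQ1 : ∑ y, Q y = 1) (hPQ : ∀ y, Q y = 0 → P y = 0) {β : ℝ}
    (hβ : 0 ≤ β) (hchi : chiSqDiv P Q ≤ β ^ 2) {M : ℝ} (hL : ∀ y a, |L y a| ≤ M) :
    Ldiv L b P Q ≤ 2 * M * β := by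
  have hQb := abs_le.1 (abs_expLoss_sub_expLoss_le hQ hQ1 hPQ hβ hchi fun y => hL y (b Q))
  have hPb := abs_le.1 (abs_expLoss_sub_expLoss_le hQ hQ1 hPQ hβ hchi fun y => hL y (b P))
  unfold Ldiv
  linarith [hQb.2, hPb.1, hb Q hQ hQ1 (b P)]

variable [Fintype 𝒜]

theorem Lentropy_le_expLoss (L : 𝒴 → 𝒜 → ℝ) (P : 𝒴 → ℝ) (a : 𝒜) :
    Lentropy L P ≤ expLoss L P a :=
  ciInf_le (Set.finite_range _).bddBelow a

theorem expLoss_eq_Lentropy_add_Ldiv [Nonempty 𝒜] {b : (𝒴 → ℝ) → 𝒜}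
    (hb : IsBayesSelector L b) (hP : ∀ y, 0 ≤ P y) (hP1 : ∑ y, P y = 1) (Q : 𝒴 → ℝ) :
    expLoss L P (b Q) = Lentropy L P + Ldiv L b P Q := by
  have : Lentropy L P = expLoss L P (b P) :=
    le_antisymm (Lentropy_le_expLoss L P _) (le_ciInf (hb P hP hP1))
  rw [this, Ldiv, add_sub_cancel]

end Loss

theorem crossEntropy_close_to_condEntropy_general {Ω Ω' 𝒳 𝒴 𝒜 : Type*} [Fintype Ω] [Fintype Ω']
    [Fintype 𝒳] [Fintype 𝒴] [Fintype 𝒜] [Nonempty 𝒜]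
    (L : 𝒴 → 𝒜 → ℝ) (M : ℝ) (hL : ∀ y a, |L y a| ≤ M)
    (b : (𝒴 → ℝ) → 𝒜) (hb : IsBayesSelector L b)
    (p : Ω → ℝ) (hp : ∀ ω, 0 ≤ p ω) (hsum : ∑ ω, p ω = 1)
    (Y : Ω → 𝒴) (X : Ω → 𝒳)
    (p' : Ω' → ℝ) (hp' : ∀ ω, 0 ≤ p' ω)
    (Y' : Ω' → 𝒴) (X' : Ω' → 𝒳)
    (hsupp : ∀ x, 0 < pr p (fun ω => X ω = x) → 0 < pr p' (fun ω => X' ω = x))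
    (hac : ∀ x, 0 < pr p (fun ω => X ω = x) → ∀ y,
      condDist p' Y' (fun ω => X' ω = x) y = 0 →
        condDist p Y (fun ω => X ω = x) y = 0)
    (β : ℝ) (hβ : 0 ≤ β)
    (hchi : ∀ x, 0 < pr p (fun ω => X ω = x) →
      chiSqDiv (condDist p Y (fun ω => X ω = x))
        (condDist p' Y' (fun ω => X' ω = x)) ≤ β ^ 2) :
    LcondEntropy L p Y X ≤ LcrossEntropy L b p Y X p' Y' X'
      ∧ LcrossEntropy L b p Y X p' Y' X' ≤ LcondEntropy L p Y X + 2 * M * β := by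
  set w : 𝒳 → ℝ := fun x => pr p (fun ω => X ω = x)
  have hw : ∀ x, 0 ≤ w x := fun x => pr_nonneg hp _
  refine ⟨sum_le_sum fun x _ =>
    mul_le_mul_of_nonneg_left (Lentropy_le_expLoss _ _ _) (hw x), ?_⟩
  have hterm : ∀ x, w x * expLoss L (condDist p Y (fun ω => X ω = x))
        (b (condDist p' Y' (fun ω => X' ω = x))) ≤
      w x * (Lentropy L (condDist p Y (fun ω => X ω = x)) + 2 * M * β) := by
    intro x
    rcases (hw x).eq_or_lt with hx | hx
    · simp [← hx]
    rw [expLoss_eq_Lentropy_add_Ldiv hb (condDist_nonneg hp Y _) (sum_condDist Y hx.ne')]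
    gcongr
    exact Ldiv_le_of_chiSqDiv_le hb (condDist_nonneg hp' Y' _) (sum_condDist Y' (hsupp x hx).ne')
      (hac x hx) hβ (hchi x hx) hL
  calc LcrossEntropy L b p Y X p' Y' X'
      ≤ ∑ x, w x * (Lentropy L (condDist p Y (fun ω => X ω = x)) + 2 * M * β) :=
        sum_le_sum fun x _ => hterm x
    _ = LcondEntropy L p Y X + 2 * M * β := by
        simp only [mul_add, sum_add_distrib, ← sum_mul, w, sum_pr_eq_sum, hsum, one_mul]
        rfl

/-- inference error vs. training error, quantitative.
If `D_{χ²}(P_{Y|X=x} ‖ P̃_{Ỹ|X̃=x}) ≤ β²` for every `x` with `P_X(x) > 0`, then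
`H_L(Y|X) ≤ H_L(Y;Ỹ|X) ≤ H_L(Y|X) + 2Mβ`. -/
theorem crossEntropy_close_to_condEntropy {Ω Ω' 𝒳 𝒴 𝒜 : Type*} [Fintype Ω] [Fintype Ω']
    [Fintype 𝒳] [Fintype 𝒴] [Fintype 𝒜] [Nonempty 𝒜]
    (L : 𝒴 → 𝒜 → ℝ) (M : ℝ) (hL : ∀ y a, |L y a| ≤ M)
    (b : (𝒴 → ℝ) → 𝒜) (hb : IsBayesSelector L b)
    (p : Ω → ℝ) (hp : ∀ ω, 0 ≤ p ω) (hsum : ∑ ω, p ω = 1)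
    (Y : Ω → 𝒴) (X : Ω → 𝒳)
    (p' : Ω' → ℝ) (hp' : ∀ ω, 0 ≤ p' ω) (hsum' : ∑ ω, p' ω = 1)
    (Y' : Ω' → 𝒴) (X' : Ω' → 𝒳)
    (hsupp : ∀ x, 0 < pr p (fun ω => X ω = x) → 0 < pr p' (fun ω => X' ω = x))
    (hac : ∀ x, 0 < pr p (fun ω => X ω = x) → ∀ y,
      condDist p' Y' (fun ω => X' ω = x) y = 0 →
        condDist p Y (fun ω => X ω = x) y = 0)
    (β : ℝ) (hβ : 0 ≤ β)
    (hchi : ∀ x, 0 < pr p (fun ω => X ω = x) →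
      chiSqDiv (condDist p Y (fun ω => X ω = x))
        (condDist p' Y' (fun ω => X' ω = x)) ≤ β ^ 2) :
    LcondEntropy L p Y X ≤ LcrossEntropy L b p Y X p' Y' X'
      ∧ LcrossEntropy L b p Y X p' Y' X' ≤ LcondEntropy L p Y X + 2 * M * β :=
  crossEntropy_close_to_condEntropy_general L M hL b hb p hp hsum Y X p' hp' Y' X' hsupp hac β hβ
    hchi
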